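/- Royden decomposition: the energy Hilbert space decomposes orthogonally as H_E = Fin ⊕ Harm, where Fin is the E-closure of the span of Dirac masses and Harm is the space of harmonic functions of finite energy. In particular, a finite-energy function u is harmonic if and only if ⟨δ_x, u⟩_E = 0 for every vertex x. -/

import Mathlib

/-! By the reproducing identity, Harm is the orthogonal complement of the Dirac masses, hence of
their closed span Fin; the decomposition is then the projection theorem for the closed
subspace Fin of the Hilbert space H_E. -/

open Submodule
open scoped InnerProductSpace

theorem Submodule.mem_orthogonal_closure_span_range_iff {𝕜 E ι : Type*} [RCLike 𝕜]
    [NormedAddCommGroup E] [InnerProductSpace 𝕜 E] (v : ι → E) (h : E) :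
    h ∈ (span 𝕜 (Set.range v)).topologicalClosureᗮ ↔ ∀ i, ⟪v i, h⟫_𝕜 = 0 := by
  rw [orthogonal_closure, ← span_singleton_le_iff_mem, ← IsOrtho, isOrtho_comm, isOrtho_span]
  simp

theorem royden_decomposition {V : Type*} {H : Type*} [NormedAddCommGroup H]
    [InnerProductSpace ℝ H] [CompleteSpace H]
    (δ : V → H) (Δ : H → V → ℝ)
    (hrep : ∀ (x : V) (u : H), inner ℝ (δ x) u = Δ u x) :
    (∀ u : H, ∃ f h : H,
        f ∈ (Submodule.span ℝ (Set.range δ)).topologicalClosure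
        ∧ (∀ x, Δ h x = 0) ∧ u = f + h)
    ∧ (∀ f h : H, f ∈ (Submodule.span ℝ (Set.range δ)).topologicalClosure →
        (∀ x, Δ h x = 0) → inner ℝ f h = (0:ℝ))
    ∧ (∀ u : H, (∀ x, Δ u x = 0) ↔ ∀ x, inner ℝ (δ x) u = (0:ℝ)) := by
  set closedSpan := (span ℝ (Set.range δ)).topologicalClosure
  have harmonic_iff_mem_orthogonal (u : H) : (∀ x, Δ u x = 0) ↔ u ∈ closedSpanᗮ := by
    simp only [closedSpan, mem_orthogonal_closure_span_range_iff, hrep]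
  refine ⟨fun u ↦ ?_, fun f h hf hh ↦ ?_, fun u ↦ by simp only [hrep]⟩
  · obtain ⟨f, hf, h, hh, rfl⟩ := closedSpan.exists_add_mem_mem_orthogonal u
    exact ⟨f, h, hf, (harmonic_iff_mem_orthogonal h).2 hh, rfl⟩
  · exact inner_right_of_mem_orthogonal hf ((harmonic_iff_mem_orthogonal h).1 hh)
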